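/- arXiv:1902.10963 — 2 statements merged into one kernel-verified Lean document; each statement's English description precedes it below -/
import Mathlib

section
/- The unaugmented Lagrangian L̃₀ has a saddle point: there exist a pair (φ̂,ψ̂) and a dual variable ŷ such that L̃₀(φ̂,ψ̂,y) ≤ L̃₀(φ̂,ψ̂,ŷ) ≤ L̃₀(φ,ψ,ŷ) for all pairs (φ,ψ) and all dual variables y. -/
open Finset Filter

noncomputable section

open Classical

namespace Paper

/-- The adjacent transposition `sᵢ` exchanging `i` and `i+1` (`0`-indexed). -/
def adjT (r : ℕ) (i : Fin (r - 1)) : Equiv.Perm (Fin r) :=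
  Equiv.swap ⟨i.1, by have := i.isLt; omega⟩ ⟨i.1 + 1, by have := i.isLt; omega⟩

/-- Kendall adjacency on `S_r` : `{π, π'} ∈ E`. -/
def KAdj (r : ℕ) (π π' : Equiv.Perm (Fin r)) : Prop :=
  ∃ i : Fin (r - 1), π' = adjT r i * π

theorem KAdj.symm {r : ℕ} {π π' : Equiv.Perm (Fin r)} (h : KAdj r π π') : KAdj r π' π := by
  obtain ⟨i, rfl⟩ := h
  refine ⟨i, ?_⟩
  rw [← mul_assoc]
  simp [adjT, Equiv.swap_mul_self]

/-- Ordered edges of the Kendall graph. -/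
def Edge (r : ℕ) : Type :=
  {p : Equiv.Perm (Fin r) × Equiv.Perm (Fin r) // KAdj r p.1 p.2}

instance (r : ℕ) : Fintype (Edge r) := by unfold Edge; infer_instance

/-- The reversed (oppositely oriented) edge. -/
def Edge.rev {r : ℕ} (e : Edge r) : Edge r := ⟨(e.1.2, e.1.1), e.2.symm⟩

/-- The simplex constraint set `Φ`. -/
def PhiSet (r : ℕ) : Set (Equiv.Perm (Fin r) → Fin (r - 1) → ℝ) :=
  {φ | (∀ π t, 0 ≤ φ π t) ∧ ∀ π, (∑ t, φ π t) = 1}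

/-- The component function `f_{π,t}` with weight `q = q_{π,t}`. -/
def fpt (q x : ℝ) : EReal :=
  if x < 0 ∨ 1 < x ∨ (x = 0 ∧ q ≠ 0) then ⊤
  else if q = 0 then 0
  else ((-(q * Real.log x) : ℝ) : EReal)

/-- The extended-real-valued function `f`. -/
def fObj (r : ℕ) (q φ : Equiv.Perm (Fin r) → Fin (r - 1) → ℝ) : EReal :=
  if ∃ π, (∑ t, φ π t) ≠ 1 then ⊤
  else ∑ π : Equiv.Perm (Fin r), ∑ t : Fin (r - 1), fpt (q π t) (φ π t)

/-- `g(ψ) = λ Σ_{unordered edges} ‖ψ_{π,π'} - ψ_{π',π}‖₂²`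
(summing over ordered edges counts every unordered edge twice). -/
def gObj (r : ℕ) (lam : ℝ) (ψ : Edge r → Fin (r - 1) → ℝ) : ℝ :=
  lam / 2 * ∑ e : Edge r, ∑ t, (ψ e t - ψ e.rev t) ^ 2

/-- `Σ_{unordered edges} (⟨y_{π,π'}, φ_π - ψ_{π,π'}⟩ + ⟨y_{π',π}, φ_{π'} - ψ_{π',π}⟩)`,
written as a sum over ordered edges. -/
def linTerm (r : ℕ) (φ : Equiv.Perm (Fin r) → Fin (r - 1) → ℝ)
    (ψ y : Edge r → Fin (r - 1) → ℝ) : ℝ :=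
  ∑ e : Edge r, ∑ t, y e t * (φ e.1.1 t - ψ e t)

/-- The unaugmented Lagrangian `L̃₀`. -/
def Ltilde (r : ℕ) (q : Equiv.Perm (Fin r) → Fin (r - 1) → ℝ) (lam : ℝ)
    (φ : Equiv.Perm (Fin r) → Fin (r - 1) → ℝ) (ψ y : Edge r → Fin (r - 1) → ℝ) : EReal :=
  fObj r q φ + ((gObj r lam ψ + linTerm r φ ψ y : ℝ) : EReal)

/-- `L⁺(φ,ψ) = sup_y L̃₀(φ,ψ,y)`. -/
def Lplus (r : ℕ) (q : Equiv.Perm (Fin r) → Fin (r - 1) → ℝ) (lam : ℝ)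
    (φ : Equiv.Perm (Fin r) → Fin (r - 1) → ℝ) (ψ : Edge r → Fin (r - 1) → ℝ) : EReal :=
  ⨆ y : Edge r → Fin (r - 1) → ℝ, Ltilde r q lam φ ψ y

/-- `L⁻(y) = sup_{φ,ψ} (-L̃₀(φ,ψ,y))`. -/
def Lminus (r : ℕ) (q : Equiv.Perm (Fin r) → Fin (r - 1) → ℝ) (lam : ℝ)
    (y : Edge r → Fin (r - 1) → ℝ) : EReal :=
  ⨆ φ : Equiv.Perm (Fin r) → Fin (r - 1) → ℝ, ⨆ ψ : Edge r → Fin (r - 1) → ℝ,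
    -Ltilde r q lam φ ψ y

/-- `Σ_{unordered edges} ‖φ_π - φ_{π'}‖₂²`. -/
def edgePen (r : ℕ) (φ : Equiv.Perm (Fin r) → Fin (r - 1) → ℝ) : ℝ :=
  (1 / 2) * ∑ e : Edge r, ∑ t, (φ e.1.1 t - φ e.1.2 t) ^ 2

/-- The regularized objective `L_λ` (with the conventions `0·log 0 = 0`,
and `+∞` if `q_{π,t} > 0` and `φ_{π,t} = 0`). -/
def Lreg (r : ℕ) (q : Equiv.Perm (Fin r) → Fin (r - 1) → ℝ) (lam : ℝ)
    (φ : Equiv.Perm (Fin r) → Fin (r - 1) → ℝ) : EReal :=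
  if ∃ π t, 0 < q π t ∧ φ π t = 0 then ⊤
  else (((-∑ π : Equiv.Perm (Fin r), ∑ t, q π t * Real.log (φ π t)) + lam * edgePen r φ : ℝ) : EReal)

/-- `p* = inf { f(φ) + g(ψ) : φ_π = ψ_{π,π'} for every oriented edge }`. -/
def pstar (r : ℕ) (q : Equiv.Perm (Fin r) → Fin (r - 1) → ℝ) (lam : ℝ) : EReal :=
  ⨅ p : {p : (Equiv.Perm (Fin r) → Fin (r - 1) → ℝ) × (Edge r → Fin (r - 1) → ℝ) //
      ∀ e : Edge r, p.1 e.1.1 = p.2 e},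
    (fObj r q p.1.1 + ((gObj r lam p.1.2 : ℝ) : EReal))

/-- The augmented Lagrangian `L_ρ` in scaled dual form. -/
def Lrho (r : ℕ) (q : Equiv.Perm (Fin r) → Fin (r - 1) → ℝ) (lam rho : ℝ)
    (φ : Equiv.Perm (Fin r) → Fin (r - 1) → ℝ) (ψ u : Edge r → Fin (r - 1) → ℝ) : EReal :=
  fObj r q φ +
    ((gObj r lam ψ + rho / 2 *
        ∑ e : Edge r, ((∑ t, (φ e.1.1 t - ψ e t + u e t) ^ 2) - ∑ t, (u e t) ^ 2) : ℝ) : EReal)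

/-- A top-`t` ranking (`t ∈ {1,…,r-1}` encoded as `τ.1 + 1` with `τ.1 : Fin (r-1)`),
given by the injective map `τ⁻¹ : {1,…,t} → {1,…,r}`. -/
def TopRank (r : ℕ) : Type :=
  Σ t : Fin (r - 1), (Fin ((t : ℕ) + 1) ↪ Fin r)

instance (r : ℕ) : Fintype (TopRank r) := by unfold TopRank; infer_instance

/-- `[τ]` : the complete rankings compatible with the top ranking `τ`. -/
def compat (r : ℕ) (τ : TopRank r) : Finset (Equiv.Perm (Fin r)) :=
  Finset.univ.filter fun π =>
    ∀ i : Fin ((τ.1 : ℕ) + 1),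
      π.symm (Fin.castLE (show (τ.1 : ℕ) + 1 ≤ r by have := τ.1.isLt; omega) i) = τ.2 i

/-- `-q·log p` in the extended reals, with `0 · log 0 = 0` and `-q·log 0 = +∞` for `q ≠ 0`. -/
def nlogTerm (q p : ℝ) : EReal :=
  if q = 0 then 0
  else if p = 0 then ⊤
  else ((-(q * Real.log p) : ℝ) : EReal)

/-- `-log x` in the extended reals (`+∞` unless `x > 0`). -/
def nlog (x : ℝ) : EReal :=
  if 0 < x then ((-Real.log x : ℝ) : EReal) else ⊤

/-- The regularized negative log-likelihood `L_λ(θ,φ)`. -/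
def Lfull (r : ℕ) (Θ : Type*) (P : Equiv.Perm (Fin r) → Θ → ℝ) (lam : ℝ)
    (n : ℕ) (τs : Fin n → TopRank r) (θ : Θ)
    (φ : Equiv.Perm (Fin r) → Fin (r - 1) → ℝ) : EReal :=
  (∑ i, nlog (∑ π ∈ compat r (τs i), φ π (τs i).1 * P π θ)) +
    ((lam * edgePen r φ : ℝ) : EReal)

private lemma coe_sum' {ι : Type*} (s : Finset ι) (f : ι → ℝ) :
    ((∑ i ∈ s, f i : ℝ) : EReal) = ∑ i ∈ s, ((f i : EReal)) := by
  induction s using Finset.cons_induction with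
  | empty => simp
  | cons a s ha ih => rw [Finset.sum_cons, Finset.sum_cons, EReal.coe_add, ih]

private lemma sum2_add {ι κ : Type*} [Fintype ι] [Fintype κ] (A B : ι → κ → ℝ) :
    (∑ i, ∑ j, (A i j + B i j)) = (∑ i, ∑ j, A i j) + ∑ i, ∑ j, B i j := by
  simp [Finset.sum_add_distrib]

private lemma sum2_sub {ι κ : Type*} [Fintype ι] [Fintype κ] (A B : ι → κ → ℝ) :
    (∑ i, ∑ j, (A i j - B i j)) = (∑ i, ∑ j, A i j) - ∑ i, ∑ j, B i j := by
  simp [Finset.sum_sub_distrib]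

private lemma sum2_mul {ι κ : Type*} [Fintype ι] [Fintype κ] (c : ℝ) (A : ι → κ → ℝ) :
    (∑ i, ∑ j, c * A i j) = c * ∑ i, ∑ j, A i j := by
  simp [Finset.mul_sum]

private lemma sum2_nonneg {ι κ : Type*} [Fintype ι] [Fintype κ] {A : ι → κ → ℝ}
    (h : ∀ i j, 0 ≤ A i j) : 0 ≤ ∑ i, ∑ j, A i j :=
  Finset.sum_nonneg fun i _ => Finset.sum_nonneg fun j _ => h i j

private lemma sum2_le {ι κ : Type*} [Fintype ι] [Fintype κ] {A B : ι → κ → ℝ}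
    (h : ∀ i j, A i j ≤ B i j) : (∑ i, ∑ j, A i j) ≤ ∑ i, ∑ j, B i j :=
  Finset.sum_le_sum fun i _ => Finset.sum_le_sum fun j _ => h i j

private lemma sum2_congr {ι κ : Type*} [Fintype ι] [Fintype κ] {A B : ι → κ → ℝ}
    (h : ∀ i j, A i j = B i j) : (∑ i, ∑ j, A i j) = ∑ i, ∑ j, B i j :=
  Finset.sum_congr rfl fun i _ => Finset.sum_congr rfl fun j _ => h i j

private lemma fpt_nonneg {q x : ℝ} (hq : 0 ≤ q) : 0 ≤ fpt q x := by
  unfold fpt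
  split_ifs with h1 h2
  · exact le_top
  · exact le_refl 0
  · push_neg at h1
    obtain ⟨h1a, h1b, h1c⟩ := h1
    have hlog : Real.log x ≤ 0 := Real.log_nonpos h1a h1b
    have : 0 ≤ -(q * Real.log x) := by nlinarith
    exact_mod_cast EReal.coe_le_coe_iff.2 this

private lemma fpt_eq {q x : ℝ} (h0 : 0 ≤ x) (h1 : x ≤ 1) (hx : q ≠ 0 → x ≠ 0) :
    fpt q x = ((-(q * Real.log x) : ℝ) : EReal) := by
  unfold fpt
  rw [if_neg]
  · split_ifs with h2
    · simp [h2]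
    · rfl
  · push_neg
    exact ⟨h0, h1, fun hx0 => by by_contra hq; exact hx hq hx0⟩

private def frF (r : ℕ) (q φ : Equiv.Perm (Fin r) → Fin (r - 1) → ℝ) : ℝ :=
  ∑ π, ∑ t, -(q π t * Real.log (φ π t))

private lemma fObj_eq {r : ℕ} {q φ : Equiv.Perm (Fin r) → Fin (r - 1) → ℝ}
    (hsum : ∀ π, ∑ t, φ π t = 1) (h0 : ∀ π t, 0 ≤ φ π t)
    (hgood : ∀ π t, q π t ≠ 0 → φ π t ≠ 0) :
    fObj r q φ = ((frF r q φ : ℝ) : EReal) := by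
  have hle1 : ∀ π t, φ π t ≤ 1 := fun π t =>
    (hsum π) ▸ Finset.single_le_sum (fun i _ => h0 π i) (Finset.mem_univ t)
  rw [fObj, if_neg (by push_neg; exact hsum), frF, coe_sum']
  refine Finset.sum_congr rfl fun π _ => ?_
  rw [coe_sum']
  exact Finset.sum_congr rfl fun t _ => fpt_eq (h0 π t) (hle1 π t) (hgood π t)

private lemma fObj_ne_top {r : ℕ} {q φ : Equiv.Perm (Fin r) → Fin (r - 1) → ℝ}
    (hq : ∀ π t, 0 ≤ q π t) (h : fObj r q φ ≠ ⊤) :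
    (∀ π, ∑ t, φ π t = 1) ∧ ∀ π t, (0 ≤ φ π t ∧ (q π t ≠ 0 → φ π t ≠ 0)) := by
  rw [fObj] at h
  split_ifs at h with hs
  · exact absurd rfl h
  push_neg at hs
  refine ⟨hs, fun π t => ?_⟩
  have hterm : fpt (q π t) (φ π t) ≠ ⊤ := by
    intro htop
    apply h
    have h1 : (⊤ : EReal) ≤ ∑ t', fpt (q π t') (φ π t') :=
      htop ▸ Finset.single_le_sum (fun i _ => fpt_nonneg (hq π i)) (Finset.mem_univ t)
    have h2 : (∑ t', fpt (q π t') (φ π t')) ≤ ∑ π', ∑ t', fpt (q π' t') (φ π' t') :=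
      Finset.single_le_sum (fun π' _ => Finset.sum_nonneg fun i _ => fpt_nonneg (hq π' i))
        (Finset.mem_univ π)
    exact top_le_iff.1 (h1.trans h2)
  unfold fpt at hterm
  split_ifs at hterm with h1 h2
  · exact absurd rfl hterm
  all_goals {
    push_neg at h1
    exact ⟨h1.1, fun hq0 h0 => hq0 (h1.2.2 h0)⟩ }

private def revE (r : ℕ) : Equiv.Perm (Edge r) :=
  Function.Involutive.toPerm Edge.rev (fun _ => rfl)

private lemma sum_rev {r : ℕ} (G : Edge r → ℝ) :
    ∑ e : Edge r, G (Edge.rev e) = ∑ e : Edge r, G e :=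
  Equiv.sum_comp (revE r) G

set_option maxHeartbeats 2000000 in
theorem stmt11 (r : ℕ) (hr : 2 ≤ r) (lam : ℝ) (hlam : 0 < lam)
    (q : Equiv.Perm (Fin r) → Fin (r - 1) → ℝ) (hq : ∀ π t, 0 ≤ q π t) :
    ∃ (φhat : Equiv.Perm (Fin r) → Fin (r - 1) → ℝ) (ψhat yhat : Edge r → Fin (r - 1) → ℝ),
      ∀ (φ : Equiv.Perm (Fin r) → Fin (r - 1) → ℝ) (ψ y : Edge r → Fin (r - 1) → ℝ),
        Ltilde r q lam φhat ψhat y ≤ Ltilde r q lam φhat ψhat yhat ∧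
        Ltilde r q lam φhat ψhat yhat ≤ Ltilde r q lam φ ψ yhat := by
  classical
  have heval : ∀ (π : Equiv.Perm (Fin r)) (t : Fin (r - 1)),
      Continuous fun φ : Equiv.Perm (Fin r) → Fin (r - 1) → ℝ => φ π t :=
    fun π t => (continuous_apply t).comp (continuous_apply π)
  have hpenc : Continuous (edgePen r) := by
    unfold edgePen
    exact continuous_const.mul (continuous_finset_sum _ fun e _ =>
      continuous_finset_sum _ fun t _ => ((heval _ _).sub (heval _ _)).pow 2)
  have hpen0 : ∀ φ, 0 ≤ edgePen r φ := by
    intro φ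
    unfold edgePen
    exact mul_nonneg (by norm_num) (sum2_nonneg fun e t => sq_nonneg _)
  have hle1 : ∀ (φ : Equiv.Perm (Fin r) → Fin (r - 1) → ℝ),
      (∀ π t, 0 ≤ φ π t) → (∀ π, ∑ t, φ π t = 1) → ∀ π t, φ π t ≤ 1 := by
    intro φ h0 hs π t
    calc φ π t ≤ ∑ t', φ π t' :=
          Finset.single_le_sum (fun i _ => h0 π i) (Finset.mem_univ t)
    _ = 1 := hs π
  have hr1 : (0:ℝ) < ((r - 1 : ℕ) : ℝ) := by
    have h : 0 < r - 1 := by omega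
    exact_mod_cast h
  set φ0 : Equiv.Perm (Fin r) → Fin (r - 1) → ℝ := fun _ _ => (((r - 1 : ℕ) : ℝ))⁻¹ with hφ0
  have hφ0sum : ∀ π, ∑ t, φ0 π t = 1 := by
    intro π
    simp only [hφ0]
    rw [Finset.sum_const, Finset.card_univ, Fintype.card_fin, nsmul_eq_mul]
    exact mul_inv_cancel₀ hr1.ne'
  have hφ0pos : ∀ (π : Equiv.Perm (Fin r)) (t : Fin (r - 1)), 0 < φ0 π t :=
    fun π t => inv_pos.2 hr1
  set M : ℝ := frF r q φ0 + lam * edgePen r φ0 with hM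
  obtain ⟨ε, hε0, hε1, hεq⟩ : ∃ ε : ℝ, 0 < ε ∧ ε ≤ (((r - 1 : ℕ) : ℝ))⁻¹ ∧
      ∀ π t, q π t ≠ 0 → M < -(q π t * Real.log ε) := by
    have hev : ∀ᶠ ε in nhdsWithin (0:ℝ) (Set.Ioi 0), (0 < ε ∧ ε ≤ (((r - 1 : ℕ) : ℝ))⁻¹ ∧
        ∀ π t, q π t ≠ 0 → M < -(q π t * Real.log ε)) := by
      refine Filter.Eventually.and ?_ (Filter.Eventually.and ?_ ?_)
      · exact Filter.eventually_of_mem self_mem_nhdsWithin fun x hx => hx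
      · have h1 : Set.Iio ((((r - 1 : ℕ) : ℝ))⁻¹) ∈ nhds (0:ℝ) := Iio_mem_nhds (inv_pos.2 hr1)
        exact Filter.eventually_of_mem (nhdsWithin_le_nhds h1) fun x hx => le_of_lt hx
      · rw [Filter.eventually_all]
        intro π
        rw [Filter.eventually_all]
        intro t
        by_cases hq0 : q π t = 0
        · exact Filter.Eventually.of_forall fun x hx => absurd hq0 hx
        · have hqpos : 0 < q π t := lt_of_le_of_ne (hq π t) (Ne.symm hq0)
          have h2 : Set.Iio (Real.exp (-((M + 1) / q π t))) ∈ nhds (0:ℝ) :=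
            Iio_mem_nhds (Real.exp_pos _)
          have h3 : ∀ᶠ x in nhdsWithin (0:ℝ) (Set.Ioi 0),
              x < Real.exp (-((M + 1) / q π t)) :=
            Filter.eventually_of_mem (nhdsWithin_le_nhds h2) fun x hx => hx
          have h4 : ∀ᶠ x in nhdsWithin (0:ℝ) (Set.Ioi 0), (0:ℝ) < x :=
            Filter.eventually_of_mem self_mem_nhdsWithin fun x hx => hx
          filter_upwards [h3, h4] with x hx hx0
          intro _
          have h5 : Real.log x < -((M + 1) / q π t) := (Real.log_lt_iff_lt_exp hx0).2 hx
          have h6 : q π t * Real.log x < q π t * (-((M + 1) / q π t)) :=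
            mul_lt_mul_of_pos_left h5 hqpos
          have h7 : q π t * (-((M + 1) / q π t)) = -(M + 1) := by field_simp
          nlinarith
    exact hev.exists
  set Kset : Set (Equiv.Perm (Fin r) → Fin (r - 1) → ℝ) :=
    {φ | (∀ π t, 0 ≤ φ π t) ∧ (∀ π, ∑ t, φ π t = 1) ∧ ∀ π t, q π t ≠ 0 → ε ≤ φ π t}
      with hKset
  have hclosed : IsClosed Kset := by
    rw [hKset]
    simp only [Set.setOf_and]
    refine IsClosed.inter ?_ (IsClosed.inter ?_ ?_)
    · simp only [Set.setOf_forall]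
      exact isClosed_iInter fun π => isClosed_iInter fun t =>
        isClosed_le continuous_const (heval π t)
    · simp only [Set.setOf_forall]
      exact isClosed_iInter fun π =>
        isClosed_eq (continuous_finset_sum _ fun t _ => heval π t) continuous_const
    · simp only [Set.setOf_forall]
      exact isClosed_iInter fun π => isClosed_iInter fun t =>
        isClosed_iInter fun _ => isClosed_le continuous_const (heval π t)
  have hcomp : IsCompact Kset := by
    refine IsCompact.of_isClosed_subset
      (isCompact_univ_pi fun _ : Equiv.Perm (Fin r) =>
        isCompact_univ_pi fun _ : Fin (r - 1) => isCompact_Icc (a := (0:ℝ)) (b := 1))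
      hclosed ?_
    rintro φ ⟨h0, hs, -⟩
    rw [Set.mem_univ_pi]
    intro π
    rw [Set.mem_univ_pi]
    intro t
    exact ⟨h0 π t, hle1 φ h0 hs π t⟩
  have hφ0mem : φ0 ∈ Kset := by
    refine ⟨fun π t => (hφ0pos π t).le, hφ0sum, fun π t _ => ?_⟩
    simp only [hφ0]
    exact hε1
  have hcont : ContinuousOn (fun φ => frF r q φ + lam * edgePen r φ) Kset := by
    refine ContinuousOn.add ?_ (continuous_const.mul hpenc).continuousOn
    unfold frF
    refine continuousOn_finset_sum _ fun π _ => continuousOn_finset_sum _ fun t _ => ?_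
    by_cases hq0 : q π t = 0
    · simp only [hq0, zero_mul, neg_zero]
      exact continuousOn_const
    · refine ContinuousOn.neg (ContinuousOn.mul continuousOn_const ?_)
      refine Real.continuousOn_log.comp (heval π t).continuousOn ?_
      intro φ hφ
      simp only [Set.mem_compl_iff, Set.mem_singleton_iff]
      have := hφ.2.2 π t hq0
      nlinarith
  obtain ⟨φh, hφhK, hφhmin⟩ := hcomp.exists_isMinOn ⟨φ0, hφ0mem⟩ hcont
  obtain ⟨hφh0, hφhsum, hφhε⟩ := hφhK
  have hφhpos : ∀ π t, q π t ≠ 0 → 0 < φh π t :=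
    fun π t h => lt_of_lt_of_le hε0 (hφhε π t h)
  have hDmin : ∀ φ : Equiv.Perm (Fin r) → Fin (r - 1) → ℝ,
      (∀ π t, 0 ≤ φ π t) → (∀ π, ∑ t, φ π t = 1) → (∀ π t, q π t ≠ 0 → φ π t ≠ 0) →
      frF r q φh + lam * edgePen r φh ≤ frF r q φ + lam * edgePen r φ := by
    intro φ h0 hs hg
    by_cases hφK : φ ∈ Kset
    · exact hφhmin hφK
    · have hφM : frF r q φh + lam * edgePen r φh ≤ M := hφhmin hφ0mem
      have hbad : ∃ π t, q π t ≠ 0 ∧ φ π t < ε := by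
        by_contra hcon
        push_neg at hcon
        exact hφK ⟨h0, hs, fun π t hq0 => hcon π t hq0⟩
      obtain ⟨π, t, hq0, hlt⟩ := hbad
      have hpos : 0 < φ π t := lt_of_le_of_ne (h0 π t) (Ne.symm (hg π t hq0))
      have hterm_all : ∀ π' t', 0 ≤ -(q π' t' * Real.log (φ π' t')) := by
        intro π' t'
        have hlog : Real.log (φ π' t') ≤ 0 :=
          Real.log_nonpos (h0 π' t') (hle1 φ h0 hs π' t')
        nlinarith [hq π' t']
      have hfr_ge : -(q π t * Real.log (φ π t)) ≤ frF r q φ :=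
        le_trans
          (Finset.single_le_sum (fun i _ => hterm_all π i) (Finset.mem_univ t))
          (Finset.single_le_sum
            (fun π' _ => Finset.sum_nonneg fun i _ => hterm_all π' i) (Finset.mem_univ π))
      have hlog2 : Real.log (φ π t) ≤ Real.log ε := Real.log_le_log hpos hlt.le
      have hqpos : 0 < q π t := lt_of_le_of_ne (hq π t) (Ne.symm hq0)
      have h8 : -(q π t * Real.log ε) ≤ -(q π t * Real.log (φ π t)) := by nlinarith
      have h9 := hεq π t hq0
      have h10 : 0 ≤ lam * edgePen r φ := mul_nonneg hlam.le (hpen0 φ)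
      linarith
  set ψh : Edge r → Fin (r - 1) → ℝ := fun e t => φh e.1.1 t with hψh
  set yh : Edge r → Fin (r - 1) → ℝ := fun e t => 2 * lam * (φh e.1.1 t - φh e.1.2 t)
    with hyh
  have hrevc1 : ∀ e : Edge r, (Edge.rev e).1.1 = e.1.2 := fun _ => rfl
  have hrevc2 : ∀ e : Edge r, (Edge.rev e).1.2 = e.1.1 := fun _ => rfl
  have hrr : ∀ e : Edge r, Edge.rev (Edge.rev e) = e := fun _ => rfl
  have hanti : ∀ G : Edge r → ℝ, (∀ e, G (Edge.rev e) = -G e) →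
      ∑ e : Edge r, G e = 0 := by
    intro G hG
    have h2 : ∑ e : Edge r, G (Edge.rev e) = -∑ e : Edge r, G e := by
      rw [← Finset.sum_neg_distrib]
      exact Finset.sum_congr rfl fun e _ => hG e
    have h3 := sum_rev G
    rw [h2] at h3
    linarith
  have hψside : ∀ ψ : Edge r → Fin (r - 1) → ℝ,
      gObj r lam ψh - (∑ e : Edge r, ∑ t, yh e t * ψh e t) ≤
        gObj r lam ψ - ∑ e : Edge r, ∑ t, yh e t * ψ e t := by
    intro ψ
    have hg : ∀ χ : Edge r → Fin (r - 1) → ℝ,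
        gObj r lam χ = ∑ e : Edge r, ∑ t, lam / 2 * (χ e t - χ (Edge.rev e) t) ^ 2 := by
      intro χ
      show lam / 2 * (∑ e : Edge r, ∑ t, (χ e t - χ (Edge.rev e) t) ^ 2) = _
      rw [sum2_mul]
    have hzero : ∑ e : Edge r, (∑ t, lam * ((φh e.1.1 t - φh e.1.2 t) *
        (φh e.1.1 t + φh e.1.2 t - ψ e t - ψ (Edge.rev e) t))) = 0 := by
      refine hanti _ fun e => ?_
      show (∑ t, lam * ((φh (Edge.rev e).1.1 t - φh (Edge.rev e).1.2 t) *
          (φh (Edge.rev e).1.1 t + φh (Edge.rev e).1.2 t - ψ (Edge.rev e) t -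
            ψ (Edge.rev (Edge.rev e)) t))) = _
      rw [← Finset.sum_neg_distrib]
      refine Finset.sum_congr rfl fun t _ => ?_
      simp only [hrevc1, hrevc2, hrr]
      ring
    have hkey : (gObj r lam ψ - ∑ e : Edge r, ∑ t, yh e t * ψ e t) -
        (gObj r lam ψh - ∑ e : Edge r, ∑ t, yh e t * ψh e t) =
        (∑ e : Edge r, ∑ t, lam / 2 *
          ((ψ e t - ψh e t) - (ψ (Edge.rev e) t - ψh (Edge.rev e) t)) ^ 2) +
        ∑ e : Edge r, (∑ t, lam * ((φh e.1.1 t - φh e.1.2 t) *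
          (φh e.1.1 t + φh e.1.2 t - ψ e t - ψ (Edge.rev e) t))) := by
      rw [hg ψ, hg ψh]
      simp only [← sum2_sub, ← sum2_add]
      refine sum2_congr fun e t => ?_
      simp only [hψh, hyh, hrevc1, hrevc2, hrr]
      ring
    have hsq : 0 ≤ ∑ e : Edge r, ∑ t, lam / 2 *
        ((ψ e t - ψh e t) - (ψ (Edge.rev e) t - ψh (Edge.rev e) t)) ^ 2 :=
      sum2_nonneg fun e t => mul_nonneg (by linarith) (sq_nonneg _)
    linarith [hkey, hzero, hsq]
  have hφside : ∀ φ : Equiv.Perm (Fin r) → Fin (r - 1) → ℝ,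
      (∀ π t, 0 ≤ φ π t) → (∀ π, ∑ t, φ π t = 1) → (∀ π t, q π t ≠ 0 → φ π t ≠ 0) →
      frF r q φh + (∑ e : Edge r, ∑ t, yh e t * φh e.1.1 t) ≤
        frF r q φ + ∑ e : Edge r, ∑ t, yh e t * φ e.1.1 t := by
    intro φ h0 hs hg0
    set d : Equiv.Perm (Fin r) → Fin (r - 1) → ℝ := fun π t => φ π t - φh π t with hd
    set B : ℝ := lam * edgePen r d with hB
    have hB0 : 0 ≤ B := mul_nonneg hlam.le (hpen0 d)
    set A : ℝ := frF r q φ - frF r q φh + ∑ e : Edge r, ∑ t, yh e t * d e.1.1 t with hA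
    have hpe : ∀ χ : Equiv.Perm (Fin r) → Fin (r - 1) → ℝ, lam * edgePen r χ =
        ∑ e : Edge r, ∑ t, lam / 2 * (χ e.1.1 t - χ e.1.2 t) ^ 2 := by
      intro χ
      rw [sum2_mul]
      show lam * ((1 / 2) * ∑ e : Edge r, ∑ t, (χ e.1.1 t - χ e.1.2 t) ^ 2) = _
      ring
    have hC : (∑ e : Edge r, ∑ t,
          lam * ((φh e.1.1 t - φh e.1.2 t) * (d e.1.1 t - d e.1.2 t))) =
        ∑ e : Edge r, ∑ t, yh e t * d e.1.1 t := by
      have h1 : ∑ e : Edge r, (∑ t, lam * ((φh e.1.1 t - φh e.1.2 t) * d e.1.2 t)) =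
          - ∑ e : Edge r, ∑ t, lam * ((φh e.1.1 t - φh e.1.2 t) * d e.1.1 t) := by
        rw [← sum_rev (fun e => ∑ t, lam * ((φh e.1.1 t - φh e.1.2 t) * d e.1.2 t))]
        rw [← Finset.sum_neg_distrib]
        refine Finset.sum_congr rfl fun e _ => ?_
        show (∑ t, lam * ((φh (Edge.rev e).1.1 t - φh (Edge.rev e).1.2 t) *
            d (Edge.rev e).1.2 t)) = _
        rw [← Finset.sum_neg_distrib]
        refine Finset.sum_congr rfl fun t _ => ?_
        simp only [hrevc1, hrevc2]
        ring
      have h2 : (∑ e : Edge r, ∑ t,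
            lam * ((φh e.1.1 t - φh e.1.2 t) * (d e.1.1 t - d e.1.2 t))) =
          (∑ e : Edge r, ∑ t, lam * ((φh e.1.1 t - φh e.1.2 t) * d e.1.1 t)) -
            ∑ e : Edge r, ∑ t, lam * ((φh e.1.1 t - φh e.1.2 t) * d e.1.2 t) := by
        rw [← sum2_sub]
        exact sum2_congr fun e t => by ring
      have h3 : ∀ (e : Edge r) (t : Fin (r - 1)), yh e t * d e.1.1 t =
          2 * (lam * ((φh e.1.1 t - φh e.1.2 t) * d e.1.1 t)) := by
        intro e t
        simp only [hyh]
        ring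
      rw [h2, h1, sum2_congr h3, sum2_mul 2]
      ring
    have hkey : ∀ s : ℝ, 0 < s → s ≤ 1 → 0 ≤ A + s * B := by
      intro s hs0 hs1
      set φs : Equiv.Perm (Fin r) → Fin (r - 1) → ℝ :=
        fun π t => φh π t + s * d π t with hφs
      have hφsc : ∀ π t, φs π t = (1 - s) * φh π t + s * φ π t := by
        intro π t
        simp only [hφs, hd]
        ring
      have hφs0 : ∀ π t, 0 ≤ φs π t := by
        intro π t
        rw [hφsc]
        exact add_nonneg (mul_nonneg (by linarith) (hφh0 π t)) (mul_nonneg hs0.le (h0 π t))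
      have hφssum : ∀ π, ∑ t, φs π t = 1 := by
        intro π
        have hcg : ∑ t, φs π t = ∑ t, ((1 - s) * φh π t + s * φ π t) :=
          Finset.sum_congr rfl fun t _ => hφsc π t
        rw [hcg, Finset.sum_add_distrib, ← Finset.mul_sum, ← Finset.mul_sum,
          hφhsum π, hs π]
        ring
      have hφsgood : ∀ π t, q π t ≠ 0 → φs π t ≠ 0 := by
        intro π t hq0
        have h1 : 0 < φ π t := lt_of_le_of_ne (h0 π t) (Ne.symm (hg0 π t hq0))
        have h2 : 0 < φh π t := hφhpos π t hq0
        have h3 : 0 < φs π t := by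
          rw [hφsc]
          nlinarith
        exact h3.ne'
      have hmin := hDmin φs hφs0 hφssum hφsgood
      have hconv : frF r q φs ≤ (1 - s) * frF r q φh + s * frF r q φ := by
        have hrhs : (1 - s) * frF r q φh + s * frF r q φ =
            ∑ π, ∑ t, ((1 - s) * -(q π t * Real.log (φh π t)) +
              s * -(q π t * Real.log (φ π t))) := by
          rw [sum2_add, sum2_mul, sum2_mul]
          rfl
        rw [hrhs]
        refine sum2_le fun π t => ?_
        by_cases hq0 : q π t = 0
        · simp [hq0]
        · have ha : 0 < φh π t := hφhpos π t hq0
          have hb : 0 < φ π t := lt_of_le_of_ne (h0 π t) (Ne.symm (hg0 π t hq0))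
          have hcc := (strictConcaveOn_log_Ioi.concaveOn).2 (Set.mem_Ioi.mpr ha)
            (Set.mem_Ioi.mpr hb) (by linarith : (0:ℝ) ≤ 1 - s) hs0.le (by ring)
          rw [smul_eq_mul, smul_eq_mul, smul_eq_mul, smul_eq_mul] at hcc
          have h2 : q π t * ((1 - s) * Real.log (φh π t) + s * Real.log (φ π t)) ≤
              q π t * Real.log (φs π t) := by
            rw [hφsc]
            exact mul_le_mul_of_nonneg_left hcc (hq π t)
          nlinarith [h2]
      have hpen_exp : lam * edgePen r φs = lam * edgePen r φh +
          s * (∑ e : Edge r, ∑ t,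
            lam * ((φh e.1.1 t - φh e.1.2 t) * (d e.1.1 t - d e.1.2 t))) + s ^ 2 * B := by
        rw [hB, hpe φs, hpe φh, hpe d]
        simp only [← sum2_mul, ← sum2_add]
        refine sum2_congr fun e t => ?_
        simp only [hφs]
        ring
      have h5 : frF r q φh + lam * edgePen r φh ≤
          (1 - s) * frF r q φh + s * frF r q φ + (lam * edgePen r φh +
            s * (∑ e : Edge r, ∑ t, yh e t * d e.1.1 t) + s ^ 2 * B) :=
        calc frF r q φh + lam * edgePen r φh ≤ frF r q φs + lam * edgePen r φs := hmin
        _ ≤ (1 - s) * frF r q φh + s * frF r q φ + lam * edgePen r φs := by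
          linarith [hconv]
        _ = _ := by rw [hpen_exp, hC]
      have h6 : 0 ≤ s * ((frF r q φ - frF r q φh +
          ∑ e : Edge r, ∑ t, yh e t * d e.1.1 t) + s * B) := by nlinarith [h5]
      have h7 : 0 ≤ (frF r q φ - frF r q φh +
          ∑ e : Edge r, ∑ t, yh e t * d e.1.1 t) + s * B := by
        by_contra hneg
        push_neg at hneg
        nlinarith [h6]
      rw [hA]
      linarith [h7]
    have hA0 : 0 ≤ A := by
      by_contra hneg
      push_neg at hneg
      set s0 : ℝ := min 1 (-A / (2 * (B + 1))) with hs0def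
      have hs0pos : 0 < s0 := lt_min one_pos (div_pos (by linarith) (by linarith))
      have hs0le : s0 ≤ 1 := min_le_left _ _
      have h1 := hkey s0 hs0pos hs0le
      have h2 : s0 ≤ -A / (2 * (B + 1)) := min_le_right _ _
      have h3 : s0 * (2 * (B + 1)) ≤ -A := (le_div_iff₀ (by linarith)).1 h2
      nlinarith [mul_nonneg hs0pos.le hB0]
    have hsplit : (∑ e : Edge r, ∑ t, yh e t * d e.1.1 t) =
        (∑ e : Edge r, ∑ t, yh e t * φ e.1.1 t) -
          ∑ e : Edge r, ∑ t, yh e t * φh e.1.1 t := by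
      rw [← sum2_sub]
      refine sum2_congr fun e t => ?_
      simp only [hd]
      ring
    rw [hA, hsplit] at hA0
    linarith
  refine ⟨φh, ψh, yh, fun φ ψ y => ?_⟩
  have hlin0 : ∀ y' : Edge r → Fin (r - 1) → ℝ, linTerm r φh ψh y' = 0 := by
    intro y'
    unfold linTerm
    refine Finset.sum_eq_zero fun e _ => Finset.sum_eq_zero fun t _ => ?_
    simp [hψh]
  have hφhObj : fObj r q φh = ((frF r q φh : ℝ) : EReal) :=
    fObj_eq hφhsum hφh0 (fun π t h => (hφhpos π t h).ne')
  constructor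
  · simp only [Ltilde]
    rw [hlin0 y, hlin0 yh]
  · by_cases htop : fObj r q φ = ⊤
    · have hrhs : Ltilde r q lam φ ψ yh = ⊤ := by
        rw [Ltilde, htop, EReal.top_add_coe]
      rw [hrhs]
      exact le_top
    · obtain ⟨hsum', hrest⟩ := fObj_ne_top hq htop
      have h0' : ∀ π t, 0 ≤ φ π t := fun π t => (hrest π t).1
      have hg' : ∀ π t, q π t ≠ 0 → φ π t ≠ 0 := fun π t => (hrest π t).2
      have hφObj : fObj r q φ = ((frF r q φ : ℝ) : EReal) := fObj_eq hsum' h0' hg'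
      have hlin : linTerm r φ ψ yh = (∑ e : Edge r, ∑ t, yh e t * φ e.1.1 t) -
          ∑ e : Edge r, ∑ t, yh e t * ψ e t := by
        unfold linTerm
        rw [← sum2_sub]
        exact sum2_congr fun e t => by ring
      have hψhy : (∑ e : Edge r, ∑ t, yh e t * ψh e t) =
          ∑ e : Edge r, ∑ t, yh e t * φh e.1.1 t :=
        sum2_congr fun e t => by simp [hψh]
      have h1 := hφside φ h0' hsum' hg'
      have h2 := hψside ψ
      simp only [Ltilde]
      rw [hφhObj, hφObj, ← EReal.coe_add, ← EReal.coe_add, EReal.coe_le_coe_iff,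
        hlin0 yh, hlin]
      linarith

end Paper
end
end

section
/- (Monotonicity of the EM iteration.) Let (θ^m, φ^m) ∈ Θ × Φ satisfy Σ_{π∈[τ_i]} φ^m_{π,t(τ_i)}·P(π;θ^m) > 0 for every i = 1,…,n. Define, for each i, q_{i,π} = φ^m_{π,t(τ_i)}·P(π;θ^m) / Σ_{π'∈[τ_i]} φ^m_{π',t(τ_i)}·P(π';θ^m) for π ∈ [τ_i] and q_{i,π} = 0 for π ∉ [τ_i]. Suppose θ^{m+1} ∈ Θ minimizes θ ↦ −Σ_{i=1}^n Σ_{π∈[τ_i]} q_{i,π}·log P(π;θ) over Θ, and φ^{m+1} ∈ Φ minimizes φ ↦ −Σ_{i=1}^n Σ_{π∈[τ_i]} q_{i,π}·log φ_{π,t(τ_i)} + λ·Σ_{{π,π'}∈E} ‖φ_π − φ_{π'}‖₂² over Φ (extended-real-valued, with log 0 = −∞). Then L_λ(θ^{m+1}, φ^{m+1}) ≤ L_λ(θ^m, φ^m). -/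
/-!
EM as a majorize–minimize scheme: by Gibbs' inequality, for any weights `q` on `[τᵢ]` summing
to one, `-log ∑ φ P ≤ ∑ q (-log φ - log P) + ∑ q log q`, with equality when `q` is the posterior
`φ P / ∑ φ P` of the current iterate. The two M-steps decrease this majorizer, hence the
objective.
-/

open Finset Filter

noncomputable section

open Classical

namespace Paper

theorem _root_.EReal.coe_finsetSum {ι : Type*} (s : Finset ι) (f : ι → ℝ) :
    ((∑ i ∈ s, f i : ℝ) : EReal) = ∑ i ∈ s, (f i : EReal) :=
  map_sum (⟨⟨Real.toEReal, EReal.coe_zero⟩, EReal.coe_add⟩ : ℝ →+ EReal) f s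

section NegLog

variable {ι : Type*} {c : Finset ι} {q a : ι → ℝ}

theorem nlogTerm_ne_bot (q p : ℝ) : nlogTerm q p ≠ ⊥ := by
  unfold nlogTerm
  split_ifs
  exacts [EReal.zero_ne_bot, top_ne_bot, EReal.coe_ne_bot _]

theorem nlogTerm_zero_right {q : ℝ} (hq : q ≠ 0) : nlogTerm q 0 = ⊤ := by
  simp [nlogTerm, hq]

theorem nlogTerm_eq_coe {q p : ℝ} (h : q = 0 ∨ p ≠ 0) :
    nlogTerm q p = ((-(q * Real.log p) : ℝ) : EReal) := by
  unfold nlogTerm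
  split_ifs with hq hp
  · simp [hq]
  · exact absurd hp (h.resolve_left hq)
  · rfl

theorem nlogTerm_mul (q f p : ℝ) : nlogTerm q (f * p) = nlogTerm q f + nlogTerm q p := by
  by_cases hq : q = 0
  · simp [nlogTerm, hq]
  rcases eq_or_ne f 0 with rfl | hf
  · rw [zero_mul, nlogTerm_zero_right hq, EReal.top_add_of_ne_bot (nlogTerm_ne_bot q p)]
  rcases eq_or_ne p 0 with rfl | hp
  · rw [mul_zero, nlogTerm_zero_right hq, EReal.add_top_of_ne_bot (nlogTerm_ne_bot q f)]
  rw [nlogTerm_eq_coe (.inr (mul_ne_zero hf hp)), nlogTerm_eq_coe (.inr hf),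
    nlogTerm_eq_coe (.inr hp), ← EReal.coe_add, Real.log_mul hf hp]
  congr 1
  ring

theorem sum_nlogTerm_eq_top {i : ι} (hi : i ∈ c) (hq : q i ≠ 0) (ha : a i = 0) :
    ∑ j ∈ c, nlogTerm (q j) (a j) = ⊤ := by
  rw [← Finset.add_sum_erase c _ hi, ha, nlogTerm_zero_right hq, EReal.top_add_of_ne_bot]
  exact Finset.sum_induction _ (· ≠ ⊥) (fun _ _ hx hy => EReal.add_ne_bot_iff.2 ⟨hx, hy⟩)
    EReal.zero_ne_bot (fun j _ => nlogTerm_ne_bot _ _)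

theorem sum_nlogTerm_eq_coe (h : ∀ i ∈ c, q i = 0 ∨ a i ≠ 0) :
    ∑ i ∈ c, nlogTerm (q i) (a i) = ((∑ i ∈ c, -(q i * Real.log (a i)) : ℝ) : EReal) := by
  rw [EReal.coe_finsetSum]
  exact Finset.sum_congr rfl fun i hi => nlogTerm_eq_coe (h i hi)

/-- Gibbs' inequality, from `log x ≤ x - 1` applied to `x = aᵢ / (qᵢ ∑ a)`. -/
theorem neg_log_sum_le_sum_mul_log_sub (hq0 : ∀ i ∈ c, 0 ≤ q i) (hq1 : ∑ i ∈ c, q i = 1)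
    (ha0 : ∀ i ∈ c, 0 ≤ a i) (hpos : ∀ i ∈ c, q i ≠ 0 → 0 < a i) (hS : 0 < ∑ i ∈ c, a i) :
    -Real.log (∑ i ∈ c, a i) ≤ ∑ i ∈ c, (q i * Real.log (q i) - q i * Real.log (a i)) := by
  set S := ∑ i ∈ c, a i
  have key : ∀ i ∈ c,
      q i * Real.log (a i) - q i * Real.log (q i) - q i * Real.log S ≤ a i / S - q i := by
    intro i hi
    rcases (hq0 i hi).eq_or_lt with h | h
    · simpa [← h] using div_nonneg (ha0 i hi) hS.le
    · have ha := hpos i hi h.ne'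
      have hlog := Real.log_le_sub_one_of_pos (show 0 < a i / (q i * S) by positivity)
      rw [Real.log_div ha.ne' (by positivity), Real.log_mul h.ne' hS.ne'] at hlog
      have hmul : q i * (a i / (q i * S)) = a i / S := by field_simp
      nlinarith [mul_le_mul_of_nonneg_left hlog h.le]
  have hsum := Finset.sum_le_sum key
  simp only [Finset.sum_sub_distrib, ← Finset.sum_mul, ← Finset.sum_div, hq1] at hsum
  have hSS : (∑ i ∈ c, a i) / S = 1 := div_self hS.ne'
  rw [Finset.sum_sub_distrib]
  linarith

theorem nlog_sum_le (hq0 : ∀ i ∈ c, 0 ≤ q i) (hq1 : ∑ i ∈ c, q i = 1) (ha0 : ∀ i ∈ c, 0 ≤ a i) :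
    nlog (∑ i ∈ c, a i) ≤
      ∑ i ∈ c, nlogTerm (q i) (a i) + ((∑ i ∈ c, q i * Real.log (q i) : ℝ) : EReal) := by
  by_cases hzero : ∃ i ∈ c, q i ≠ 0 ∧ a i = 0
  · obtain ⟨i, hi, hq, ha⟩ := hzero
    rw [sum_nlogTerm_eq_top hi hq ha, EReal.top_add_of_ne_bot (EReal.coe_ne_bot _)]
    exact le_top
  push Not at hzero
  have hpos : ∀ i ∈ c, q i ≠ 0 → 0 < a i :=
    fun i hi hq => (ha0 i hi).lt_of_ne (hzero i hi hq).symm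
  obtain ⟨i₀, hi₀, hq₀⟩ := Finset.exists_ne_zero_of_sum_ne_zero (hq1 ▸ one_ne_zero)
  have hS : 0 < ∑ i ∈ c, a i := (hpos i₀ hi₀ hq₀).trans_le (Finset.single_le_sum ha0 hi₀)
  rw [nlog, if_pos hS, sum_nlogTerm_eq_coe fun i hi => or_iff_not_imp_left.2 (hzero i hi),
    ← EReal.coe_add, EReal.coe_le_coe_iff]
  have := neg_log_sum_le_sum_mul_log_sub hq0 hq1 ha0 hpos hS
  simp only [Finset.sum_sub_distrib, Finset.sum_neg_distrib] at this ⊢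
  linarith

theorem nlog_sum_eq (hS : 0 < ∑ i ∈ c, a i) (hq : ∀ i ∈ c, q i = a i / ∑ j ∈ c, a j) :
    nlog (∑ i ∈ c, a i) =
      ∑ i ∈ c, nlogTerm (q i) (a i) + ((∑ i ∈ c, q i * Real.log (q i) : ℝ) : EReal) := by
  set S := ∑ i ∈ c, a i
  have hq_or : ∀ i ∈ c, q i = 0 ∨ a i ≠ 0 := fun i hi => by
    rw [hq i hi, div_eq_zero_iff]; tauto
  rw [nlog, if_pos hS, sum_nlogTerm_eq_coe hq_or, ← EReal.coe_add, ← Finset.sum_add_distrib,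
    EReal.coe_eq_coe_iff]
  have hterm : ∀ i ∈ c, -(q i * Real.log (a i)) + q i * Real.log (q i) = -Real.log S * q i := by
    intro i hi
    rcases hq_or i hi with h | h
    · simp [h]
    · rw [hq i hi, Real.log_div h hS.ne']; ring
  rw [Finset.sum_congr rfl hterm, ← Finset.mul_sum, Finset.sum_congr rfl hq, ← Finset.sum_div,
    div_self hS.ne', mul_one]

end NegLog

section EMStep

variable {r : ℕ} {Θ : Type*} {P : Equiv.Perm (Fin r) → Θ → ℝ} {lam : ℝ} {n : ℕ}
  {τs : Fin n → TopRank r} {Q : Fin n → Equiv.Perm (Fin r) → ℝ} {θ : Θ}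
  {φ : Equiv.Perm (Fin r) → Fin (r - 1) → ℝ}

/-- The EM majorizer of `Lfull` at fixed E-step weights `Q`: the first summand is the
M-step objective in `φ`, the second the one in `θ`, and the entropy term is constant. -/
def emSurrogate (r : ℕ) {Θ : Type*} (P : Equiv.Perm (Fin r) → Θ → ℝ) (lam : ℝ) (n : ℕ)
    (τs : Fin n → TopRank r) (Q : Fin n → Equiv.Perm (Fin r) → ℝ) (θ : Θ)
    (φ : Equiv.Perm (Fin r) → Fin (r - 1) → ℝ) : EReal :=
  ((∑ i, ∑ π ∈ compat r (τs i), nlogTerm (Q i π) (φ π (τs i).1)) +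
      ((lam * edgePen r φ : ℝ) : EReal)) +
    (∑ i, ∑ π ∈ compat r (τs i), nlogTerm (Q i π) (P π θ)) +
    ((∑ i, ∑ π ∈ compat r (τs i), Q i π * Real.log (Q i π) : ℝ) : EReal)

theorem emSurrogate_eq_sum_add :
    emSurrogate r P lam n τs Q θ φ =
      (∑ i, ((∑ π ∈ compat r (τs i), nlogTerm (Q i π) (φ π (τs i).1 * P π θ)) +
        ((∑ π ∈ compat r (τs i), Q i π * Real.log (Q i π) : ℝ) : EReal))) +
      ((lam * edgePen r φ : ℝ) : EReal) := by
  simp only [emSurrogate, nlogTerm_mul, Finset.sum_add_distrib, EReal.coe_finsetSum]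
  abel

theorem Lfull_le_emSurrogate (hQ0 : ∀ i, ∀ π ∈ compat r (τs i), 0 ≤ Q i π)
    (hQ1 : ∀ i, ∑ π ∈ compat r (τs i), Q i π = 1) (hφ : ∀ π t, 0 ≤ φ π t)
    (hP : ∀ π, 0 ≤ P π θ) :
    Lfull r Θ P lam n τs θ φ ≤ emSurrogate r P lam n τs Q θ φ := by
  rw [emSurrogate_eq_sum_add, Lfull]
  gcongr with i
  exact nlog_sum_le (hQ0 i) (hQ1 i) fun π _ => mul_nonneg (hφ π _) (hP π)

theorem Lfull_eq_emSurrogate (hpos : ∀ i, 0 < ∑ π ∈ compat r (τs i), φ π (τs i).1 * P π θ)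
    (hQ : ∀ i, ∀ π ∈ compat r (τs i),
      Q i π = φ π (τs i).1 * P π θ / ∑ π' ∈ compat r (τs i), φ π' (τs i).1 * P π' θ) :
    Lfull r Θ P lam n τs θ φ = emSurrogate r P lam n τs Q θ φ := by
  rw [emSurrogate_eq_sum_add, Lfull]
  congr 1
  exact Finset.sum_congr rfl fun i _ => nlog_sum_eq (hpos i) (hQ i)

end EMStep

theorem stmt14_general (r : ℕ) (lam : ℝ)
    (Θ : Type*) (P : Equiv.Perm (Fin r) → Θ → ℝ)
    (hP : ∀ θ : Θ, (∀ π, 0 ≤ P π θ) ∧ (∑ π : Equiv.Perm (Fin r), P π θ) = 1)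
    (n : ℕ) (τs : Fin n → TopRank r)
    (θm : Θ) (φm : Equiv.Perm (Fin r) → Fin (r - 1) → ℝ) (hφm : φm ∈ PhiSet r)
    (hpos : ∀ i, 0 < ∑ π ∈ compat r (τs i), φm π (τs i).1 * P π θm)
    (Q : Fin n → Equiv.Perm (Fin r) → ℝ)
    (hQ : ∀ i π, Q i π =
      if π ∈ compat r (τs i) then
        φm π (τs i).1 * P π θm / ∑ π' ∈ compat r (τs i), φm π' (τs i).1 * P π' θm
      else 0)
    (θm1 : Θ)
    (hθ : ∀ θ' : Θ,
      (∑ i, ∑ π ∈ compat r (τs i), nlogTerm (Q i π) (P π θm1)) ≤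
        ∑ i, ∑ π ∈ compat r (τs i), nlogTerm (Q i π) (P π θ'))
    (φm1 : Equiv.Perm (Fin r) → Fin (r - 1) → ℝ) (hφm1 : φm1 ∈ PhiSet r)
    (hφ : ∀ φ' ∈ PhiSet r,
      (∑ i, ∑ π ∈ compat r (τs i), nlogTerm (Q i π) (φm1 π (τs i).1)) +
          ((lam * edgePen r φm1 : ℝ) : EReal) ≤
        (∑ i, ∑ π ∈ compat r (τs i), nlogTerm (Q i π) (φ' π (τs i).1)) +
          ((lam * edgePen r φ' : ℝ) : EReal)) :
    Lfull r Θ P lam n τs θm1 φm1 ≤ Lfull r Θ P lam n τs θm φm := by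
  have hQ_on : ∀ i, ∀ π ∈ compat r (τs i),
      Q i π = φm π (τs i).1 * P π θm / ∑ π' ∈ compat r (τs i), φm π' (τs i).1 * P π' θm :=
    fun i π hπ => by rw [hQ, if_pos hπ]
  have hQ0 : ∀ i, ∀ π ∈ compat r (τs i), 0 ≤ Q i π := fun i π hπ => by
    rw [hQ_on i π hπ]
    exact div_nonneg (mul_nonneg (hφm.1 π _) ((hP θm).1 π)) (hpos i).le
  have hQ1 : ∀ i, ∑ π ∈ compat r (τs i), Q i π = 1 := fun i => by
    rw [Finset.sum_congr rfl (hQ_on i), ← Finset.sum_div, div_self (hpos i).ne']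
  calc Lfull r Θ P lam n τs θm1 φm1 ≤ emSurrogate r P lam n τs Q θm1 φm1 :=
        Lfull_le_emSurrogate hQ0 hQ1 hφm1.1 (hP θm1).1
    _ ≤ emSurrogate r P lam n τs Q θm φm :=
        add_le_add (add_le_add (hφ φm hφm) (hθ θm)) le_rfl
    _ = Lfull r Θ P lam n τs θm φm := (Lfull_eq_emSurrogate hpos hQ_on).symm

theorem stmt14 (r : ℕ) (hr : 2 ≤ r) (lam : ℝ) (hlam : 0 < lam)
    (Θ : Type*) [Nonempty Θ] (P : Equiv.Perm (Fin r) → Θ → ℝ)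
    (hP : ∀ θ : Θ, (∀ π, 0 ≤ P π θ) ∧ (∑ π : Equiv.Perm (Fin r), P π θ) = 1)
    (n : ℕ) (τs : Fin n → TopRank r)
    (θm : Θ) (φm : Equiv.Perm (Fin r) → Fin (r - 1) → ℝ) (hφm : φm ∈ PhiSet r)
    (hpos : ∀ i, 0 < ∑ π ∈ compat r (τs i), φm π (τs i).1 * P π θm)
    (Q : Fin n → Equiv.Perm (Fin r) → ℝ)
    (hQ : ∀ i π, Q i π =
      if π ∈ compat r (τs i) then
        φm π (τs i).1 * P π θm / ∑ π' ∈ compat r (τs i), φm π' (τs i).1 * P π' θm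
      else 0)
    (θm1 : Θ)
    (hθ : ∀ θ' : Θ,
      (∑ i, ∑ π ∈ compat r (τs i), nlogTerm (Q i π) (P π θm1)) ≤
        ∑ i, ∑ π ∈ compat r (τs i), nlogTerm (Q i π) (P π θ'))
    (φm1 : Equiv.Perm (Fin r) → Fin (r - 1) → ℝ) (hφm1 : φm1 ∈ PhiSet r)
    (hφ : ∀ φ' ∈ PhiSet r,
      (∑ i, ∑ π ∈ compat r (τs i), nlogTerm (Q i π) (φm1 π (τs i).1)) +
          ((lam * edgePen r φm1 : ℝ) : EReal) ≤
        (∑ i, ∑ π ∈ compat r (τs i), nlogTerm (Q i π) (φ' π (τs i).1)) +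
          ((lam * edgePen r φ' : ℝ) : EReal)) :
    Lfull r Θ P lam n τs θm1 φm1 ≤ Lfull r Θ P lam n τs θm φm :=
  stmt14_general r lam Θ P hP n τs θm φm hφm hpos Q hQ θm1 hθ φm1 hφm1 hφ

end Paper
end
end
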